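/- arXiv:1805.09688 — 2 statements merged into one kernel-verified Lean document; each statement's English description precedes it below -/
import Mathlib

section
/- If max(r1 - m1, r2 - m2) > 0, then W(θ1, 0, 0) > 0 or W(θ2, 0, 0) > 0; in fact sup over z of W(z, 0, 0) > 0. Consequently, by continuity and the limit W(z,0,0) → -∞ as |z| → ∞, the set {z : W(z, 0, 0) ≥ 0} is a nonempty compact set. -/
/-!
Writing `a₁, a₂` for the diagonal entries, the larger eigenvalue satisfies
`max a₁ a₂ ≤ W ≤ max a₁ a₂ + √(m₁ m₂)`. The lower bound gives positivity: at `z = θᵢ` the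
entry `aᵢ` equals `rᵢ - mᵢ`, which is positive for some `i`. The upper bound gives
compactness: both `aᵢ` are downward parabolas, so `W → -∞` away from compact sets, and a
continuous function with this property has compact superlevel sets.
-/

open Filter

lemma max_eq_half_add_add_half_abs_sub (a b : ℝ) : max a b = 1/2 * (a + b) + 1/2 * |a - b| := by
  have h₁ := min_add_max a b
  have h₂ := max_sub_min_eq_abs' a b
  linarith

lemma max_le_half_add_add_half_sqrt (a b : ℝ) {c : ℝ} (hc : 0 ≤ c) :
    max a b ≤ 1/2 * (a + b) + 1/2 * √((a - b)^2 + c) := by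
  have : |a - b| ≤ √((a - b)^2 + c) := by
    rw [← Real.sqrt_sq_eq_abs]
    exact Real.sqrt_le_sqrt (by linarith)
  rw [max_eq_half_add_add_half_abs_sub]
  linarith

lemma sqrt_sq_add_le_abs_add_sqrt (x : ℝ) {c : ℝ} (hc : 0 ≤ c) :
    √(x^2 + c) ≤ |x| + √c := by
  rw [Real.sqrt_le_iff]
  refine ⟨by positivity, ?_⟩
  nlinarith [Real.sq_sqrt hc, sq_abs x, abs_nonneg x, Real.sqrt_nonneg c]

lemma half_add_add_half_sqrt_le (a b : ℝ) {c : ℝ} (hc : 0 ≤ c) :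
    1/2 * (a + b) + 1/2 * √((a - b)^2 + c) ≤ max a b + 1/2 * √c := by
  rw [max_eq_half_add_add_half_abs_sub]
  linarith [sqrt_sq_add_le_abs_add_sqrt (a - b) hc]

lemma tendsto_sub_sq_cocompact_atTop (c : ℝ) :
    Tendsto (fun z : ℝ => (z - c)^2) (cocompact ℝ) atTop := by
  have := tendsto_norm_cocompact_atTop.comp
    (Homeomorph.subRight c).isClosedEmbedding.tendsto_cocompact
  simpa [Function.comp_def, sq_abs] using (tendsto_pow_atTop two_ne_zero).comp this

lemma tendsto_const_sub_mul_sub_sq_cocompact_atBot (r : ℝ) {g : ℝ} (hg : 0 < g) (c : ℝ) :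
    Tendsto (fun z : ℝ => r - g * (z - c)^2) (cocompact ℝ) atBot := by
  simpa [sub_eq_add_neg] using tendsto_atBot_add_const_left _ r
    (tendsto_neg_atTop_atBot.comp ((tendsto_sub_sq_cocompact_atTop c).const_mul_atTop hg))

lemma isCompact_setOf_le_of_tendsto_cocompact_atBot {X : Type*} [TopologicalSpace X] {f : X → ℝ}
    (hf : Continuous f) (hlim : Tendsto f (cocompact X) atBot) (c : ℝ) :
    IsCompact {x | c ≤ f x} := by
  obtain ⟨K, hK, hsub⟩ := mem_cocompact.mp (hlim.eventually (eventually_lt_atBot c))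
  refine hK.of_isClosed_subset (isClosed_le continuous_const hf) fun x hx => ?_
  by_contra hxK
  exact (hsub hxK).not_ge (show c ≤ f x from hx)

theorem viability_positive_fitness
    (r1 r2 g1 g2 m1 m2 θ : ℝ)
    (hg1 : 0 < g1) (hg2 : 0 < g2) (hm1 : 0 < m1) (hm2 : 0 < m2)
    (hviab : 0 < max (r1 - m1) (r2 - m2))
    (a1 a2 : ℝ → ℝ)
    (ha1 : ∀ z, a1 z = (r1 - g1 * (z - (-θ))^2) - m1)
    (ha2 : ∀ z, a2 z = (r2 - g2 * (z - θ)^2) - m2)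
    (W : ℝ → ℝ)
    (hW : ∀ z, W z = (1/2) * (a1 z + a2 z)
        + (1/2) * Real.sqrt ((a1 z - a2 z)^2 + 4 * m1 * m2)) :
    (0 < W (-θ) ∨ 0 < W θ) ∧ (∃ z, 0 < W z) ∧
    ({z : ℝ | 0 ≤ W z}.Nonempty ∧ IsCompact {z : ℝ | 0 ≤ W z}) := by
  have hc : 0 ≤ 4 * m1 * m2 := by positivity
  have hmax_le : ∀ z, max (a1 z) (a2 z) ≤ W z := fun z =>
    (hW z).symm ▸ max_le_half_add_add_half_sqrt _ _ hc
  have hpeak : 0 < W (-θ) ∨ 0 < W θ := by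
    rcases lt_max_iff.mp hviab with h | h
    · have : a1 (-θ) = r1 - m1 := by rw [ha1]; ring
      exact .inl (by linarith [hmax_le (-θ), le_max_left (a1 (-θ)) (a2 (-θ))])
    · have : a2 θ = r2 - m2 := by rw [ha2]; ring
      exact .inr (by linarith [hmax_le θ, le_max_right (a1 θ) (a2 θ)])
  have hpos : ∃ z, 0 < W z := hpeak.elim (⟨-θ, ·⟩) (⟨θ, ·⟩)
  have hcont : Continuous W := by
    rw [funext hW, funext ha1, funext ha2]
    fun_prop
  have hlim : Tendsto W (cocompact ℝ) atBot := by
    refine tendsto_atBot_mono (fun z => (hW z).trans_le (half_add_add_half_sqrt_le _ _ hc)) ?_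
    refine tendsto_atBot_add_const_right _ _ (tendsto_sup_atBot _ ?_ ?_)
    · simpa only [funext ha1, ← sub_eq_add_neg] using tendsto_atBot_add_const_right _ (-m1)
        (tendsto_const_sub_mul_sub_sq_cocompact_atBot r1 hg1 (-θ))
    · simpa only [funext ha2, ← sub_eq_add_neg] using tendsto_atBot_add_const_right _ (-m2)
        (tendsto_const_sub_mul_sub_sq_cocompact_atBot r2 hg2 θ)
  exact ⟨hpeak, hpos, hpos.imp fun _ => le_of_lt,
    isCompact_setOf_le_of_tendsto_cocompact_atBot hcont hlim 0⟩
end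

section
/- Let a1, a2 : ℝ → ℝ be given by ai(z) = ri - gi(z - θi)^2 - κi Ni - mi with g1, g2 > 0, and let W(z) = (1/2)(a1 + a2)(z) + (1/2)·sqrt((a1 - a2)^2(z) + 4 m1 m2) with m1 m2 > 0. Then the set {z : W(z) = 0} equals the set {z : a1(z) a2(z) = m1 m2 and a1(z) + a2(z) < 0}, and this set is finite with at most 4 elements. -/
/-!
`W z` is the larger root of `t² - (a₁ + a₂) t + (a₁ a₂ - m₁ m₂)`, so it vanishes exactly when `0` is
a root, i.e. `a₁ a₂ = m₁ m₂`, and the other root `a₁ + a₂` is negative. As `a₁ a₂ - m₁ m₂` is a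
quartic polynomial in `z` with leading coefficient `g₁ g₂ ≠ 0`, it has at most four real roots.
-/

open Polynomial

theorem half_add_half_sqrt_eq_zero_iff {a b c : ℝ} (hc : 0 < c) :
    (1/2) * (a + b) + (1/2) * √((a - b)^2 + 4 * c) = 0 ↔ a * b = c ∧ a + b < 0 := by
  have hdisc : 0 < (a - b)^2 + 4 * c := by positivity
  constructor
  · intro h
    have hsqrt : √((a - b)^2 + 4 * c) = -(a + b) := by linarith
    have hsum : a + b < 0 := by linarith [hsqrt ▸ Real.sqrt_pos.mpr hdisc]
    have hsq : (a - b)^2 + 4 * c = (a + b)^2 := by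
      rw [← Real.sq_sqrt hdisc.le, hsqrt, neg_sq]
    exact ⟨by linarith, hsum⟩
  · rintro ⟨hprod, hsum⟩
    have hsq : (a - b)^2 + 4 * c = (a + b)^2 := by rw [← hprod]; ring
    rw [hsq, Real.sqrt_sq_eq_abs, abs_of_neg hsum]
    ring

theorem natDegree_C_sub_C_mul_X_sub_C_sq {R : Type*} [CommRing R]
    (c g u : R) (hg : g ≠ 0) : (C c - C g * (X - C u)^2).natDegree = 2 := by
  compute_degree!

theorem natDegree_quadratic_mul_quadratic_sub_C {R : Type*} [CommRing R] [NoZeroDivisors R]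
    (c₁ c₂ g₁ g₂ u₁ u₂ c : R) (hg₁ : g₁ ≠ 0) (hg₂ : g₂ ≠ 0) :
    ((C c₁ - C g₁ * (X - C u₁)^2) * (C c₂ - C g₂ * (X - C u₂)^2) - C c).natDegree = 4 := by
  have h₁ := natDegree_C_sub_C_mul_X_sub_C_sq c₁ g₁ u₁ hg₁
  have h₂ := natDegree_C_sub_C_mul_X_sub_C_sq c₂ g₂ u₂ hg₂
  rw [natDegree_sub_C, natDegree_mul (ne_zero_of_natDegree_gt (n := 0) (by omega))
    (ne_zero_of_natDegree_gt (n := 0) (by omega)), h₁, h₂]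

theorem finite_and_ncard_le_natDegree_of_subset_rootSet {R : Type*} [CommRing R] [IsDomain R]
    {p : R[X]} {s : Set R} (hs : s ⊆ p.rootSet R) : s.Finite ∧ s.ncard ≤ p.natDegree :=
  ⟨(p.rootSet_finite R).subset hs,
    (Set.ncard_le_ncard hs (p.rootSet_finite R)).trans (p.ncard_rootSet_le R)⟩

theorem fitness_zero_set_finite
    (r1 r2 g1 g2 κ1 κ2 m1 m2 θ N1 N2 : ℝ)
    (hg1 : 0 < g1) (hg2 : 0 < g2)
    (hm : 0 < m1 * m2)
    (a1 a2 : ℝ → ℝ)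
    (ha1 : ∀ z, a1 z = r1 - g1 * (z - (-θ))^2 - κ1 * N1 - m1)
    (ha2 : ∀ z, a2 z = r2 - g2 * (z - θ)^2 - κ2 * N2 - m2)
    (W : ℝ → ℝ)
    (hW : ∀ z, W z = (1/2) * (a1 z + a2 z)
        + (1/2) * Real.sqrt ((a1 z - a2 z)^2 + 4 * m1 * m2)) :
    {z : ℝ | W z = 0} = {z : ℝ | a1 z * a2 z = m1 * m2 ∧ a1 z + a2 z < 0} ∧
    {z : ℝ | W z = 0}.Finite ∧ {z : ℝ | W z = 0}.ncard ≤ 4 := by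
  have hzero : {z : ℝ | W z = 0} = {z : ℝ | a1 z * a2 z = m1 * m2 ∧ a1 z + a2 z < 0} := by
    ext z
    simp only [Set.mem_ofPred_eq, hW, mul_assoc 4 m1 m2]
    exact half_add_half_sqrt_eq_zero_iff hm
  set p : ℝ[X] := (C (r1 - κ1 * N1 - m1) - C g1 * (X - C (-θ))^2) *
    (C (r2 - κ2 * N2 - m2) - C g2 * (X - C θ)^2) - C (m1 * m2)
  have hdeg : p.natDegree = 4 :=
    natDegree_quadratic_mul_quadratic_sub_C _ _ _ _ _ _ _ hg1.ne' hg2.ne'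
  have heval : ∀ z, p.eval z = a1 z * a2 z - m1 * m2 := fun z => by
    simp only [p, ha1, ha2, eval_sub, eval_mul, eval_pow, eval_C, eval_X]
    ring
  have hroots : {z : ℝ | W z = 0} ⊆ p.rootSet ℝ := by
    intro z hz
    rw [hzero] at hz
    rw [mem_rootSet, coe_aeval_eq_eval, heval, hz.1, sub_self]
    exact ⟨ne_zero_of_natDegree_gt (n := 0) (by omega), rfl⟩
  exact ⟨hzero, hdeg ▸ finite_and_ncard_le_natDegree_of_subset_rootSet hroots⟩
end
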